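/- arXiv:1208.4196 — 2 statements merged into one kernel-verified Lean document; each statement's English description precedes it below -/
import Mathlib

section
/- For all nonnegative integers m and n, the coefficient identity \sum_{j} (-1)^{m+j} \binom{2n}{n-j}\binom{2m}{m+j} = \sum_{k} (-1)^k \binom{2m}{k} \binom{2n-2m}{m+n-2k} holds, obtained by equating coefficients of x^{m+n} in (1+x)^{2n}(1-x)^{2m} = (1-x^2)^{2m}(1+x)^{2n-2m}, assuming m \le n. -/
/-- Binomial coefficient with an integer lower argument: `0` when the lower
argument is negative (and, via `Nat.choose`, `0` when it exceeds the top). -/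
def ichoose (a : ℕ) (b : ℤ) : ℤ := if 0 ≤ b then (a.choose b.toNat : ℤ) else 0

/-!
Both sides are the coefficient of `x^(m+n)` in the same polynomial. Read with integer indices
(coefficients at negative indices being `0`), the left side is the Cauchy product of the
coefficients of `(1-x)^(2m)` and `(1+x)^(2n)`, and the right side the Cauchy product of the
coefficients of `(1-x)^(2m)`, spread out to even degrees, with those of `(1+x)^(2n-2m)`,
i.e. a coefficient of `(1-x²)^(2m)(1+x)^(2n-2m)`. The two products agree because
`(1-x)(1+x) = 1-x²`.
-/

open Polynomial

namespace Polynomial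

variable {R : Type*} [CommRing R]

def intCoeff (p : R[X]) (i : ℤ) : R := if 0 ≤ i then p.coeff i.toNat else 0

@[simp]
lemma intCoeff_natCast (p : R[X]) (k : ℕ) : p.intCoeff k = p.coeff k := by
  simp [intCoeff]

lemma intCoeff_of_neg (p : R[X]) {i : ℤ} (hi : i < 0) : p.intCoeff i = 0 :=
  if_neg hi.not_ge

lemma coeff_X_pow_mul_eq_intCoeff (q : R[X]) (d N : ℕ) :
    (X ^ d * q).coeff N = q.intCoeff (N - d) := by
  rw [coeff_X_pow_mul', intCoeff]
  split_ifs <;> first | omega | rfl | congr 1; omega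

lemma finsum_intCoeff_mul (p : R[X]) (g : ℤ → R) :
    ∑ᶠ k : ℤ, p.intCoeff k * g k = ∑ k ∈ Finset.range (p.natDegree + 1), p.coeff k * g k := by
  rw [finsum_eq_sum_of_support_subset _
      (s := (Finset.range (p.natDegree + 1)).map Nat.castEmbedding), Finset.sum_map]
  · simp
  intro k hk
  have hk : p.intCoeff k ≠ 0 := left_ne_zero_of_mul hk
  lift k to ℕ using not_lt.1 (mt p.intCoeff_of_neg hk)
  rw [intCoeff_natCast] at hk
  simpa [Nat.lt_succ_iff] using le_natDegree_of_ne_zero hk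

lemma coeff_expand_mul_eq_finsum (d : ℕ) (p q : R[X]) (N : ℕ) :
    (expand R d p * q).coeff N = ∑ᶠ k : ℤ, p.intCoeff k * q.intCoeff (N - d * k) := by
  conv_lhs => rw [p.as_sum_range_C_mul_X_pow]
  simp only [map_sum, map_mul, expand_C, map_pow, expand_X, ← pow_mul, Finset.sum_mul,
    finsetSum_coeff, mul_assoc, coeff_C_mul, coeff_X_pow_mul_eq_intCoeff, finsum_intCoeff_mul]
  push_cast
  rfl

lemma coeff_mul_eq_finsum (p q : R[X]) (N : ℕ) :
    (p * q).coeff N = ∑ᶠ k : ℤ, p.intCoeff k * q.intCoeff (N - k) := by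
  simpa using coeff_expand_mul_eq_finsum 1 p q N

lemma coeff_one_sub_X_pow (N i : ℕ) :
    ((1 - X : R[X]) ^ N).coeff i = (-1) ^ i * N.choose i := by
  have h : (1 - X : R[X]) = C (-1) * (X + C (-1)) := by simp; ring
  rw [h, mul_pow, ← C_pow, coeff_C_mul, coeff_X_add_C_pow, ← mul_assoc, ← pow_add]
  rcases le_or_gt i N with hi | hi
  · rw [show N + (N - i) = i + 2 * (N - i) by omega, pow_add, pow_mul]; simp
  · simp [Nat.choose_eq_zero_of_lt hi]

lemma one_sub_X_pow_mul_one_add_X_pow {m n : ℕ} (h : m ≤ n) :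
    (1 - X : R[X]) ^ m * (1 + X) ^ n = expand R 2 ((1 - X) ^ m) * (1 + X) ^ (n - m) := by
  have hsq : (1 - X : R[X]) * (1 + X) = expand R 2 (1 - X) := by simp; ring
  rw [← Nat.add_sub_of_le h, pow_add, ← mul_assoc, ← mul_pow, hsq, map_pow,
    Nat.add_sub_cancel_left]

end Polynomial

lemma ichoose_eq_intCoeff (a : ℕ) (b : ℤ) : ichoose a b = ((1 + X : ℤ[X]) ^ a).intCoeff b := by
  simp [ichoose, intCoeff, coeff_one_add_X_pow]

lemma neg_one_pow_mul_ichoose (a : ℕ) (b : ℤ) :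
    (-1) ^ b.natAbs * ichoose a b = ((1 - X : ℤ[X]) ^ a).intCoeff b := by
  obtain ⟨k, rfl⟩ | hb := (le_or_gt 0 b).imp Int.eq_ofNat_of_zero_le id
  · simp [ichoose, coeff_one_sub_X_pow]
  · simp [ichoose, intCoeff, hb.not_ge]

lemma mem_Icc_of_ichoose_ne_zero {a : ℕ} {b : ℤ} (h : ichoose a b ≠ 0) : b ∈ Set.Icc 0 (a : ℤ) := by
  unfold ichoose at h
  split_ifs at h with hb
  · have : b.toNat ≤ a := by by_contra! ha; simp [Nat.choose_eq_zero_of_lt ha] at h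
    exact ⟨hb, by omega⟩
  · exact absurd rfl h

/-- Equating coefficients of `x^(m+n)` in `(1+x)^(2n)(1-x)^(2m) = (1-x²)^(2m)(1+x)^(2n-2m)`:
`∑_j (-1)^(m+j) C(2n, n-j) C(2m, m+j) = ∑_k (-1)^k C(2m, k) C(2n-2m, m+n-2k)`,
sums over all integers (all nonzero terms lie in the given ranges). -/
theorem coeff_identity (m n : ℕ) (hmn : m ≤ n) :
    (∑ j ∈ Finset.Icc (-(m : ℤ) - n) ((m : ℤ) + n),
        (-1) ^ ((m : ℤ) + j).natAbs * ichoose (2 * n) ((n : ℤ) - j) *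
          ichoose (2 * m) ((m : ℤ) + j)) =
      ∑ k ∈ Finset.Icc (0 : ℤ) (2 * (m : ℤ)),
        (-1) ^ k.natAbs * ichoose (2 * m) k *
          ichoose (2 * n - 2 * m) ((m : ℤ) + n - 2 * k) := by
  have hL : (∑ j ∈ Finset.Icc (-(m : ℤ) - n) ((m : ℤ) + n),
        (-1) ^ ((m : ℤ) + j).natAbs * ichoose (2 * n) ((n : ℤ) - j) *
          ichoose (2 * m) ((m : ℤ) + j)) =
      ((1 - X : ℤ[X]) ^ (2 * m) * (1 + X) ^ (2 * n)).coeff (m + n) := by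
    rw [← finsum_eq_sum_of_support_subset]
    · rw [coeff_mul_eq_finsum, eq_comm, ← finsum_comp_equiv (Equiv.addLeft (m : ℤ))]
      refine finsum_congr fun j => ?_
      rw [mul_right_comm, neg_one_pow_mul_ichoose, ichoose_eq_intCoeff, Equiv.coe_addLeft]
      congr 2; push_cast; ring
    · intro j hj
      have := mem_Icc_of_ichoose_ne_zero (right_ne_zero_of_mul hj)
      simp only [Set.mem_Icc, Finset.coe_Icc] at this ⊢; omega
  have hR : (∑ k ∈ Finset.Icc (0 : ℤ) (2 * (m : ℤ)),
        (-1) ^ k.natAbs * ichoose (2 * m) k *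
          ichoose (2 * n - 2 * m) ((m : ℤ) + n - 2 * k)) =
      (expand ℤ 2 ((1 - X) ^ (2 * m)) * (1 + X) ^ (2 * n - 2 * m)).coeff (m + n) := by
    rw [← finsum_eq_sum_of_support_subset]
    · rw [coeff_expand_mul_eq_finsum]
      refine finsum_congr fun k => ?_
      rw [neg_one_pow_mul_ichoose, ichoose_eq_intCoeff]
      push_cast; rfl
    · intro k hk
      simpa using mem_Icc_of_ichoose_ne_zero (right_ne_zero_of_mul (left_ne_zero_of_mul hk))
  rw [hL, hR, one_sub_X_pow_mul_one_add_X_pow (by omega)]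
end

section
/- For all nonnegative integers m and for s \le 3, S(m,m+s) = \binom{2m}{m}\binom{2s}{s} - \binom{2m}{m-1}\binom{2s}{s+2} - \binom{2m}{m+1}\binom{2s}{s-2}, where S(m,n) = (2m)!(2n)!/(m! n! (m+n)!) and binomial coefficients with out-of-range arguments are 0. -/
/-- Super Catalan number `S(m,n) = (2m)!(2n)!/(m! n! (m+n)!)`. -/
def superCatalan (m n : ℕ) : ℕ :=
  (Nat.factorial (2 * m) * Nat.factorial (2 * n)) /
    (Nat.factorial m * Nat.factorial n * Nat.factorial (m + n))

/-!
Writing `C(2m, m) = (m + 1) Cₘ` and `C(2m, m ± 1) = m Cₘ` with the Catalan number `Cₘ`, the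
right-hand side becomes `((m + 1) C(2s, s) - m (C(2s, s + 2) + C(2s, s - 2))) Cₘ`. On the other
side, cancelling `(2m)! = (m + 1) Cₘ (m!)²` from the factorials shows that `S(m, m + s)` is
`(m + 1) Cₘ (2m + 1)(2m + 2)⋯(2m + 2s) / ((m + 1)⋯(m + s) (2m + 1)⋯(2m + s))`; for each `s ≤ 3`
both sides are then the same explicit multiple of `Cₘ`.
-/

open Nat

lemma two_mul_choose_self_eq (m : ℕ) : (2 * m).choose m = (m + 1) * catalan m := by
  rw [← centralBinom_eq_two_mul_choose, succ_mul_catalan_eq_centralBinom]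

lemma two_mul_choose_succ_eq (m : ℕ) : (2 * m).choose (m + 1) = m * catalan m := by
  have h := choose_succ_right_eq (2 * m) m
  rw [two_mul_choose_self_eq, show 2 * m - m = m by omega] at h
  exact Nat.eq_of_mul_eq_mul_right (by omega : 0 < m + 1) (by rw [h]; ring)

lemma factorial_two_mul_eq (m : ℕ) : (2 * m)! = (m + 1) * catalan m * (m ! * m !) := by
  have h := choose_mul_factorial_mul_factorial (show m ≤ 2 * m by omega)
  rw [show 2 * m - m = m by omega, two_mul_choose_self_eq] at h
  rw [← h]; ring

lemma ichoose_natCast (a k : ℕ) : ichoose a k = a.choose k := by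
  simp [ichoose]

lemma ichoose_of_neg {a : ℕ} {b : ℤ} (hb : b < 0) : ichoose a b = 0 :=
  if_neg (by omega)

lemma ichoose_two_mul_self (m : ℕ) : ichoose (2 * m) m = (m + 1) * catalan m := by
  rw [ichoose_natCast, two_mul_choose_self_eq]; push_cast; ring

lemma ichoose_two_mul_self_add_one (m : ℕ) : ichoose (2 * m) (m + 1) = m * catalan m := by
  rw [← Nat.cast_succ, ichoose_natCast, two_mul_choose_succ_eq]; push_cast; ring

lemma ichoose_two_mul_self_sub_one (m : ℕ) : ichoose (2 * m) (m - 1) = m * catalan m := by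
  cases m with
  | zero => simp [ichoose_of_neg]
  | succ k =>
    rw [show ((k + 1 : ℕ) : ℤ) - 1 = (k : ℕ) by push_cast; ring, ichoose_natCast,
      choose_symm_of_eq_add (show 2 * (k + 1) = k + (k + 2) by ring),
      two_mul_choose_succ_eq (k + 1)]
    push_cast; ring

lemma superCatalan_eq_of_mul_eq {m n x : ℕ}
    (h : x * (m ! * n ! * (m + n)!) = (2 * m)! * (2 * n)!) : superCatalan m n = x :=
  Nat.div_eq_of_eq_mul_left (by positivity) h.symm

lemma superCatalan_self_add_eq_of_mul_eq {m s x : ℕ}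
    (h : x * ((m + 1).ascFactorial s * (2 * m + 1).ascFactorial s) =
      (m + 1) * catalan m * (2 * m + 1).ascFactorial (2 * s)) :
    superCatalan m (m + s) = x := by
  apply superCatalan_eq_of_mul_eq
  rw [← factorial_mul_ascFactorial m s, show m + (m + s) = 2 * m + s by ring,
    ← factorial_mul_ascFactorial (2 * m) s, show 2 * (m + s) = 2 * m + 2 * s by ring,
    ← factorial_mul_ascFactorial (2 * m) (2 * s), factorial_two_mul_eq]
  calc _ = x * ((m + 1).ascFactorial s * (2 * m + 1).ascFactorial s) *
        ((m + 1) * catalan m * (m ! * m !)) * (m ! * m !) := by ring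
    _ = _ := by rw [h]; ring

/-- For `s ≤ 3`,
`S(m, m+s) = C(2m,m) C(2s,s) - C(2m,m-1) C(2s,s+2) - C(2m,m+1) C(2s,s-2)`. -/
theorem superCatalan_three_terms (m s : ℕ) (hs : s ≤ 3) :
    (superCatalan m (m + s) : ℤ) =
      ichoose (2 * m) (m : ℤ) * ichoose (2 * s) (s : ℤ)
        - ichoose (2 * m) ((m : ℤ) - 1) * ichoose (2 * s) ((s : ℤ) + 2)
        - ichoose (2 * m) ((m : ℤ) + 1) * ichoose (2 * s) ((s : ℤ) - 2) := by
  rw [ichoose_two_mul_self, ichoose_two_mul_self_sub_one, ichoose_two_mul_self_add_one]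
  interval_cases s
  · rw [superCatalan_self_add_eq_of_mul_eq (x := (m + 1) * catalan m) (by simp)]
    simp +decide [ichoose]
  · rw [superCatalan_self_add_eq_of_mul_eq (x := 2 * (m + 1) * catalan m)
      (by simp [ascFactorial_succ]; ring)]
    simp +decide [ichoose]; ring
  · rw [superCatalan_self_add_eq_of_mul_eq (x := 2 * (2 * m + 3) * catalan m)
      (by simp [ascFactorial_succ]; ring)]
    simp +decide [ichoose, choose]; ring
  · rw [superCatalan_self_add_eq_of_mul_eq (x := 4 * (2 * m + 5) * catalan m)
      (by simp [ascFactorial_succ]; ring)]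
    simp +decide [ichoose, choose]; ring
end
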